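/- arXiv:1109.6607 — 3 statements merged into one kernel-verified Lean document; each statement's English description precedes it below -/
import Mathlib

section
/- Let A be a symmetric linear operator on a real n-dimensional inner product space (n ≥ 2), r a real number, and l ≥ 1 a natural number. Then the k-th elementary symmetric function of the eigenvalues of Id + r^l·A satisfies σ_k(Id + r^l·A) = C(n,k) + C(n-1,k-1)·r^l·tr(A) + O(r^{2l}) as r → 0, for 1 ≤ k ≤ n-1. -/
/-!
By the principal-minor expansion, `σ_k(1 + t A) = ∑_{|s| = k} det (1 + t A_s)`, and each minor is
`1 + t tr A_s + O(t²)`. The constant terms add up to `C(n,k)`, and since every index lies in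
`C(n-1,k-1)` of the `k`-subsets, the traces add up to `C(n-1,k-1) tr A`. The remainder is `t²`
times a polynomial in `t`, hence `O(r^{2l})` at `t = r^l`.
-/

open Asymptotics Finset Polynomial

theorem Finset.sum_powersetCard_univ_sum {ι M : Type*} [Fintype ι] [DecidableEq ι]
    [AddCommMonoid M] (f : ι → M) {k : ℕ} (hk : 1 ≤ k) :
    ∑ s ∈ univ.powersetCard k, ∑ i ∈ s, f i =
      (Fintype.card ι - 1).choose (k - 1) • ∑ i, f i := by
  rw [sum_comm' (t' := univ) (s' := fun i => (univ.powersetCard k).filter ({i} ⊆ ·))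
    (by simp), smul_sum]
  refine sum_congr rfl fun i _ => ?_
  rw [sum_const, card_filter_powersetCard_subset _ _ _ (subset_univ _) (by simpa using hk),
    card_singleton, card_univ]

namespace Matrix

variable {R ι : Type*} [CommRing R] [DecidableEq ι]

theorem submatrix_one_add_smul {κ : Type*} [DecidableEq κ] {e : κ → ι}
    (he : Function.Injective e) (t : R) (A : Matrix ι ι R) :
    (1 + t • A).submatrix e e = 1 + t • A.submatrix e e := by
  ext i j
  simp only [submatrix_apply, add_apply, smul_apply, one_apply, he.eq_iff]

variable [Fintype ι]

theorem exists_neg_one_pow_mul_coeff_charpoly_one_add_smul (A : Matrix ι ι R) {k : ℕ}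
    (hk₁ : 1 ≤ k) (hk₂ : k ≤ Fintype.card ι) :
    ∃ g : R[X], ∀ t : R,
      (-1) ^ k * (1 + t • A).charpoly.coeff (Fintype.card ι - k) =
        (Fintype.card ι).choose k + (Fintype.card ι - 1).choose (k - 1) * t * A.trace +
          g.eval t * t ^ 2 := by
  refine ⟨∑ s ∈ univ.powersetCard k,
    (det (1 + (X : R[X]) • (A.submatrix (Subtype.val : s → ι) Subtype.val).map C)).divX.divX,
    fun t => ?_⟩
  have hsign : ((-1 : R) ^ k) * (-1) ^ k = 1 := by rw [← mul_pow]; simp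
  have htrace : ∑ s ∈ univ.powersetCard k,
      (A.submatrix (Subtype.val : s → ι) Subtype.val).trace =
      (Fintype.card ι - 1).choose (k - 1) * A.trace := by
    simp only [trace, diag_apply, submatrix_apply]
    rw [← nsmul_eq_mul, ← sum_powersetCard_univ_sum _ hk₁]
    exact sum_congr rfl fun s _ => sum_coe_sort s fun i => A i i
  rw [charpoly_coeff_eq_sum_minors _ _ hk₂, ← mul_assoc, hsign, one_mul]
  rw [sum_congr rfl fun s _ =>
    (congrArg det (submatrix_one_add_smul Subtype.val_injective t A)).trans (det_one_add_smul _ _)]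
  simp only [sum_add_distrib, sum_const, card_powersetCard, card_univ, eval_finsetSum, sum_mul]
  rw [← sum_mul, htrace, nsmul_one]
  ring

end Matrix

theorem stmt0_general {n : ℕ} (l : ℕ) (k : ℕ)
    (hk1 : 1 ≤ k) (hk2 : k ≤ n - 1)
    (A : Matrix (Fin n) (Fin n) ℝ) :
    (fun r : ℝ =>
        (-1 : ℝ) ^ k * ((1 + r ^ l • A).charpoly.coeff (n - k)) -
          ((n.choose k : ℝ) + ((n - 1).choose (k - 1) : ℝ) * r ^ l * A.trace))
      =O[nhds (0 : ℝ)] fun r : ℝ => r ^ (2 * l) := by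
  obtain ⟨g, hg⟩ :=
    A.exists_neg_one_pow_mul_coeff_charpoly_one_add_smul hk1 (by rw [Fintype.card_fin]; omega)
  simp only [Fintype.card_fin] at hg
  have hg_bdd : (fun r : ℝ => g.eval (r ^ l)) =O[nhds 0] fun _ => (1 : ℝ) :=
    ((g.continuous.comp (continuous_pow l)).tendsto 0).isBigO_one ℝ
  refine (hg_bdd.mul (isBigO_refl (fun r : ℝ => r ^ (2 * l)) _)).congr (fun r => ?_)
    fun r => ?_
  · rw [hg, pow_mul']
    ring
  · exact one_mul _

/-- σ_k(Id + r^l·A) = C(n,k) + C(n-1,k-1)·r^l·tr A + O(r^{2l}) as r → 0,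
where σ_k is the k-th elementary symmetric function of the eigenvalues, read off
from the characteristic polynomial det(λI - A) = Σ (-1)^k σ_k(A) λ^{n-k}. -/
theorem stmt0 {n : ℕ} (hn : 2 ≤ n) (l : ℕ) (hl : 1 ≤ l) (k : ℕ)
    (hk1 : 1 ≤ k) (hk2 : k ≤ n - 1)
    (A : Matrix (Fin n) (Fin n) ℝ) (hA : A.IsSymm) :
    (fun r : ℝ =>
        (-1 : ℝ) ^ k * ((1 + r ^ l • A).charpoly.coeff (n - k)) -
          ((n.choose k : ℝ) + ((n - 1).choose (k - 1) : ℝ) * r ^ l * A.trace))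
      =O[nhds (0 : ℝ)] fun r : ℝ => r ^ (2 * l) :=
  stmt0_general l k hk1 hk2 A
end

section
/- Let A, B, C(t) be smooth operator families with C symmetric, and suppose 16·tr(C'(t)∘C(t)^2) - 3·tr(C'(t)∘C''(t)) = 0 for all t. Then the function t ↦ tr(32·C(t)^3 - 9·C'(t)∘C'(t)) is constant. In particular, in a Riemannian manifold where L_3 = L_5 = L_7 = 0, the quantity tr(32 R_v^3 - 9 R_v' ∘ R_v') is invariant under the geodesic flow. -/
/-!
By the product rule and cyclicity of the trace, the derivative of
`32 tr(C³) - 9 tr(C'C')` is `96 tr(C'C²) - 18 tr(C'C'') = 6 (16 tr(C'C²) - 3 tr(C'C''))`,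
which vanishes identically; a function with zero derivative everywhere is constant.
-/

open Matrix

section EntrywiseDerivatives

variable {𝕜 : Type*} [NontriviallyNormedField 𝕜] {l m n : Type*} [Fintype m]

theorem hasDerivAt_mul_apply {A : 𝕜 → Matrix l m 𝕜} {B : 𝕜 → Matrix m n 𝕜}
    {A' : Matrix l m 𝕜} {B' : Matrix m n 𝕜} {t : 𝕜}
    (hA : ∀ i j, HasDerivAt (fun s => A s i j) (A' i j) t)
    (hB : ∀ i j, HasDerivAt (fun s => B s i j) (B' i j) t) (i : l) (j : n) :
    HasDerivAt (fun s => (A s * B s) i j) ((A' * B t + A t * B') i j) t := by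
  simp only [Matrix.add_apply, mul_apply, ← Finset.sum_add_distrib]
  exact HasDerivAt.fun_sum fun k _ => (hA i k).mul (hB k j)

theorem hasDerivAt_trace [Fintype n] {A : 𝕜 → Matrix n n 𝕜} {A' : Matrix n n 𝕜} {t : 𝕜}
    (hA : ∀ i j, HasDerivAt (fun s => A s i j) (A' i j) t) :
    HasDerivAt (fun s => (A s).trace) A'.trace t :=
  HasDerivAt.fun_sum fun i _ => hA i i

theorem hasDerivAt_trace_mul_self [Fintype n] {C : 𝕜 → Matrix n n 𝕜} {C' : Matrix n n 𝕜} {t : 𝕜}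
    (hC : ∀ i j, HasDerivAt (fun s => C s i j) (C' i j) t) :
    HasDerivAt (fun s => (C s * C s).trace) (2 * (C t * C').trace) t := by
  convert hasDerivAt_trace (hasDerivAt_mul_apply hC hC) using 1
  rw [trace_add, trace_mul_comm C']
  ring

theorem hasDerivAt_trace_mul_self_mul_self [Fintype n]
    {C : 𝕜 → Matrix n n 𝕜} {C' : Matrix n n 𝕜} {t : 𝕜}
    (hC : ∀ i j, HasDerivAt (fun s => C s i j) (C' i j) t) :
    HasDerivAt (fun s => (C s * C s * C s).trace) (3 * (C' * (C t * C t)).trace) t := by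
  convert hasDerivAt_trace (hasDerivAt_mul_apply (hasDerivAt_mul_apply hC hC) hC) using 1
  rw [add_mul, trace_add, trace_add, trace_mul_cycle (C t) C' (C t),
    trace_mul_cycle (C t) (C t) C', Matrix.mul_assoc]
  ring

end EntrywiseDerivatives

theorem stmt10_general {n : ℕ} (C C1 C2 : ℝ → Matrix (Fin n) (Fin n) ℝ)
    (hd1 : ∀ t i j, HasDerivAt (fun s => C s i j) (C1 t i j) t)
    (hd2 : ∀ t i j, HasDerivAt (fun s => C1 s i j) (C2 t i j) t)
    (h : ∀ t, 16 * (C1 t * (C t * C t)).trace - 3 * (C1 t * C2 t).trace = 0) :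
    ∀ t, 32 * (C t * C t * C t).trace - 9 * (C1 t * C1 t).trace =
      32 * (C 0 * C 0 * C 0).trace - 9 * (C1 0 * C1 0).trace := by
  have hderiv : ∀ t, HasDerivAt
      (fun s => 32 * (C s * C s * C s).trace - 9 * (C1 s * C1 s).trace) 0 t := by
    intro t
    refine (((hasDerivAt_trace_mul_self_mul_self (hd1 t)).const_mul 32).sub
      ((hasDerivAt_trace_mul_self (hd2 t)).const_mul 9)).congr_deriv ?_
    linarith [h t]
  exact fun t => is_const_of_deriv_eq_zero (fun s => (hderiv s).differentiableAt)
    (fun s => (hderiv s).deriv) t 0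

/-- If C(t) is a C² family of symmetric matrices with
16 tr(C'∘C²) - 3 tr(C'∘C'') = 0 for all t, then
t ↦ tr(32 C(t)³ - 9 C'(t)∘C'(t)) is constant. -/
theorem stmt10 {n : ℕ} (C C1 C2 : ℝ → Matrix (Fin n) (Fin n) ℝ)
    (hsymm : ∀ t, (C t).IsSymm)
    (hd1 : ∀ t i j, HasDerivAt (fun s => C s i j) (C1 t i j) t)
    (hd2 : ∀ t i j, HasDerivAt (fun s => C1 s i j) (C2 t i j) t)
    (h : ∀ t, 16 * (C1 t * (C t * C t)).trace - 3 * (C1 t * C2 t).trace = 0) :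
    ∀ t, 32 * (C t * C t * C t).trace - 9 * (C1 t * C1 t).trace =
      32 * (C 0 * C 0 * C 0).trace - 9 * (C1 0 * C1 0).trace :=
  stmt10_general C C1 C2 hd1 hd2 h
end

section
/- Assume tr R_v^{(k)} = 0 for all k ≥ 1, tr(R_v∘R_v') = 0, tr(R_v'∘R_v' + R_v∘R_v'') = 0, and tr(3R_v''∘R_v' + R_v∘R_v^{(3)}) = 0 for all unit v. Then L_7 = tr C_v^{(7)}(0) = 0 is equivalent to 16·tr(R_v' ∘ R_v^2) - 3·tr(R_v' ∘ R_v'') = 0, using the explicit formula for C_v^{(7)}(0). -/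
/-!
Taking traces, cyclicity collapses the eight terms of `C_v^{(7)}(0)` to
`9 tr R⁽⁵⁾ + 20 tr(R R⁽³⁾) + 54 tr(R' R'') + 32 tr(R' R²)`. The first term vanishes, and the
identity `tr(R R⁽³⁾) = -3 tr(R'' R')` turns the rest into `2 (16 tr(R' R²) - 3 tr(R' R''))`,
so `L_7 = -(7/6) (16 tr(R' R²) - 3 tr(R' R''))`.
-/

namespace Matrix

variable {ι K : Type*} [Fintype ι] [CommRing K]

theorem trace_mul_mul_self_eq (A B : Matrix ι ι K) : (A * A * B).trace = (B * (A * A)).trace :=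
  trace_mul_comm _ _

theorem trace_mul_self_mul_eq (A B : Matrix ι ι K) : (B * A * A).trace = (B * (A * A)).trace := by
  rw [Matrix.mul_assoc]

theorem trace_mul_mul_eq (A B : Matrix ι ι K) : (A * B * A).trace = (B * (A * A)).trace := by
  rw [trace_mul_cycle, trace_mul_mul_self_eq]

theorem trace_smul_seventh_jet (c : K) (R0 R1 R2 R3 R5 : Matrix ι ι K) :
    (c • ((9 : K) • R5 + (10 : K) • (R0 * R3) + (10 : K) • (R3 * R0)
      + (27 : K) • (R1 * R2) + (27 : K) • (R2 * R1)
      + (11 : K) • (R0 * R0 * R1) + (11 : K) • (R1 * R0 * R0)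
      + (10 : K) • (R0 * R1 * R0))).trace
      = c * (9 * R5.trace + 20 * (R0 * R3).trace + 54 * (R1 * R2).trace
        + 32 * (R1 * (R0 * R0)).trace) := by
  simp only [trace_smul, trace_add, smul_eq_mul, trace_mul_comm R3 R0, trace_mul_comm R2 R1,
    trace_mul_mul_self_eq, trace_mul_self_mul_eq, trace_mul_mul_eq]
  ring

end Matrix

theorem stmt12_general {n : ℕ} (R0 R1 R2 R3 R5 C7 : Matrix (Fin n) (Fin n) ℝ)
    (ht5 : R5.trace = 0)
    (hd2 : 3 * (R2 * R1).trace + (R0 * R3).trace = 0)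
    (hC7 : C7 = -(7 / 12 : ℝ) • ((9 : ℝ) • R5 + (10 : ℝ) • (R0 * R3) + (10 : ℝ) • (R3 * R0)
      + (27 : ℝ) • (R1 * R2) + (27 : ℝ) • (R2 * R1)
      + (11 : ℝ) • (R0 * R0 * R1) + (11 : ℝ) • (R1 * R0 * R0)
      + (10 : ℝ) • (R0 * R1 * R0))) :
    C7.trace = 0 ↔ 16 * (R1 * (R0 * R0)).trace - 3 * (R1 * R2).trace = 0 := by
  have hL7 : C7.trace = -(7 / 6) * (16 * (R1 * (R0 * R0)).trace - 3 * (R1 * R2).trace) := by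
    rw [Matrix.trace_mul_comm R2 R1] at hd2
    rw [hC7, Matrix.trace_smul_seventh_jet, ht5]
    linear_combination (-(7 / 12) * 20 : ℝ) * hd2
  rw [hL7, mul_eq_zero, or_iff_right (by norm_num)]

/-- Under tr R^{(k)} = 0 (k ≥ 1), tr(R∘R') = 0, tr(R'∘R' + R∘R'') = 0 and
tr(3R''∘R' + R∘R^{(3)}) = 0, the Ledger condition L_7 = tr C_v^{(7)}(0) = 0 is
equivalent to 16 tr(R'∘R²) - 3 tr(R'∘R'') = 0. -/
theorem stmt12 {n : ℕ} (R0 R1 R2 R3 R5 C7 : Matrix (Fin n) (Fin n) ℝ)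
    (h0 : R0.IsSymm) (h1 : R1.IsSymm) (h2 : R2.IsSymm) (h3 : R3.IsSymm) (h5 : R5.IsSymm)
    (ht1 : R1.trace = 0) (ht2 : R2.trace = 0) (ht3 : R3.trace = 0) (ht5 : R5.trace = 0)
    (hL5 : (R0 * R1).trace = 0)
    (hd1 : (R1 * R1).trace + (R0 * R2).trace = 0)
    (hd2 : 3 * (R2 * R1).trace + (R0 * R3).trace = 0)
    (hC7 : C7 = -(7 / 12 : ℝ) • ((9 : ℝ) • R5 + (10 : ℝ) • (R0 * R3) + (10 : ℝ) • (R3 * R0)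
      + (27 : ℝ) • (R1 * R2) + (27 : ℝ) • (R2 * R1)
      + (11 : ℝ) • (R0 * R0 * R1) + (11 : ℝ) • (R1 * R0 * R0)
      + (10 : ℝ) • (R0 * R1 * R0))) :
    C7.trace = 0 ↔ 16 * (R1 * (R0 * R0)).trace - 3 * (R1 * R2).trace = 0 :=
  stmt12_general R0 R1 R2 R3 R5 C7 ht5 hd2 hC7
end
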